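/- arXiv:2604.19739 — 2 statements merged into one kernel-verified Lean document; each statement's English description precedes it below -/
import Mathlib

section
/- Let (X,d,μ) be an η-Ahlfors regular quasi-metric measure space with η > 0 and triangular constant κ ≥ 1, let ρ be the third order hypermetric induced by d, and let 0 < γ < 2η. Then for every pair f, g of nonnegative measurable functions on X and every x ∈ X, T^γ(f,g)(x) ≤ (2κ)^γ I_{η−γ/2}(f · I_{η−γ/2}g)(x). -/
/-!
For every centre `u`, the quasi-triangle inequality through `u` bounds both `d(x,y)` and `d(y,z)`
by `2κ · max {d(x,u), d(y,u), d(z,u)}`; taking the infimum over `u` gives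
`d(x,y) d(y,z) ≤ (2κ ρ(x,y,z))²`, i.e. `ρ^{-γ} ≤ (2κ)^γ d(x,y)^{-γ/2} d(y,z)^{-γ/2}`.
Integrating this kernel bound against `f(y) g(z)`, first in `z` and then in `y`, gives the claim.
-/

open MeasureTheory ENNReal

/-- The third order hypermetric induced by `d`:
`ρ(x,y,z) = inf_{u ∈ X} max {d(x,u), d(y,u), d(z,u)}`. -/
noncomputable def hyperRho {X : Type*} (d : X → X → ℝ) (x y z : X) : ℝ :=
  ⨅ u : X, max (d x u) (max (d y u) (d z u))

/-- `d` is a quasi-metric on `X` with triangular constant `κ`. -/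
def IsQuasiMetric {X : Type*} (d : X → X → ℝ) (κ : ℝ) : Prop :=
  (∀ x y, 0 ≤ d x y) ∧ (∀ x y, (d x y = 0 ↔ x = y)) ∧ (∀ x y, d x y = d y x) ∧
    (∀ x y z, d x z ≤ κ * (d x y + d y z))

/-- `(X,d,μ)` is `η`-Ahlfors regular with constants `a ≤ A`. -/
def IsAhlfors {X : Type*} [MeasurableSpace X] (d : X → X → ℝ) (μ : Measure X)
    (η a A : ℝ) : Prop :=
  ∀ x : X, ∀ r : ℝ, 0 < r →
    ENNReal.ofReal (a * r ^ η) ≤ μ {y | d x y < r} ∧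
      μ {y | d x y < r} ≤ ENNReal.ofReal (A * r ^ η)

/-- The bilinear fractional integral operator
`T^γ(f,g)(x) = ∬ f(y) g(z) ρ(x,y,z)^{-γ} dμ(y) dμ(z)`
(with the convention `0 ^ (-γ) = ∞` for `γ > 0`, as in `ENNReal.rpow`). -/
noncomputable def Tgamma {X : Type*} [MeasurableSpace X] (d : X → X → ℝ)
    (μ : Measure X) (γ : ℝ) (f g : X → ℝ≥0∞) (x : X) : ℝ≥0∞ :=
  ∫⁻ y, ∫⁻ z, f y * g z * (ENNReal.ofReal (hyperRho d x y z)) ^ (-γ) ∂μ ∂μ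

/-- The linear fractional integral operator of order `β` in the `η`-dimensional
space `(X,d,μ)`: `I_β h(x) = ∫ h(y) d(x,y)^{β-η} dμ(y)`. -/
noncomputable def fracInt {X : Type*} [MeasurableSpace X] (d : X → X → ℝ)
    (μ : Measure X) (β η : ℝ) (h : X → ℝ≥0∞) (x : X) : ℝ≥0∞ :=
  ∫⁻ y, h y * (ENNReal.ofReal (d x y)) ^ (β - η) ∂μ

/-- The `L^p(μ)` norm of a nonnegative function, `p` a real exponent. -/
noncomputable def lpNorm {X : Type*} [MeasurableSpace X] (μ : Measure X) (p : ℝ)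
    (h : X → ℝ≥0∞) : ℝ≥0∞ :=
  (∫⁻ x, (h x) ^ p ∂μ) ^ (1 / p)

namespace ENNReal

lemma rpow_neg_le_rpow_neg {p q : ℝ≥0∞} {s : ℝ} (hs : 0 ≤ s) (h : p ≤ q) :
    q ^ (-s) ≤ p ^ (-s) := by
  rw [rpow_neg, rpow_neg]
  exact ENNReal.inv_le_inv.2 (rpow_le_rpow h hs)

lemma rpow_neg_le_mul_rpow_neg_mul_rpow_neg {p q r c : ℝ≥0∞} {γ : ℝ} (hγ : 0 ≤ γ)
    (hc₀ : c ≠ 0) (hc : c ≠ ⊤) (hp : p ≤ c * r) (hq : q ≤ c * r) :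
    r ^ (-γ) ≤ c ^ γ * (p ^ (-(γ / 2)) * q ^ (-(γ / 2))) := by
  have hcancel : c ^ γ * c ^ (-γ) = 1 := by
    rw [rpow_neg, ENNReal.mul_inv_cancel (by simp [hc₀, hγ]) (by simp [hc, hγ])]
  calc r ^ (-γ) = c ^ γ * (c * r) ^ (-γ) := by
        rw [mul_rpow_eq_ite, if_neg (by simp [hc₀, hc]), ← mul_assoc, hcancel, one_mul]
    _ = c ^ γ * ((c * r) ^ (-(γ / 2)) * (c * r) ^ (-(γ / 2))) := by
        rw [← sq, ← rpow_two, ← rpow_mul]; ring_nf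
    _ ≤ c ^ γ * (p ^ (-(γ / 2)) * q ^ (-(γ / 2))) := by
        gcongr c ^ γ * ?_
        have hγ2 : 0 ≤ γ / 2 := by positivity
        exact mul_le_mul' (rpow_neg_le_rpow_neg hγ2 hp) (rpow_neg_le_rpow_neg hγ2 hq)

end ENNReal

namespace IsQuasiMetric

variable {X : Type*} {d : X → X → ℝ} {κ : ℝ}

lemma le_two_mul_of_le (hqm : IsQuasiMetric d κ) (hκ : 0 ≤ κ) {x y u : X} {M : ℝ}
    (hx : d x u ≤ M) (hy : d y u ≤ M) : d x y ≤ 2 * κ * M :=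
  calc d x y ≤ κ * (d x u + d u y) := hqm.2.2.2 x u y
    _ ≤ κ * (M + M) := by rw [hqm.2.2.1 u y]; gcongr
    _ = 2 * κ * M := by ring

lemma max_le_two_mul_hyperRho (hqm : IsQuasiMetric d κ) (hκ : 0 < κ) (x y z : X) :
    max (d x y) (d y z) ≤ 2 * κ * hyperRho d x y z := by
  have : Nonempty X := ⟨x⟩
  rw [← div_le_iff₀' (by positivity)]
  refine le_ciInf fun u => (div_le_iff₀' (by positivity)).2 (max_le ?_ ?_)
  · exact hqm.le_two_mul_of_le hκ.le (le_max_left _ _) (le_max_of_le_right (le_max_left _ _))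
  · exact hqm.le_two_mul_of_le hκ.le (le_max_of_le_right (le_max_left _ _))
      (le_max_of_le_right (le_max_right _ _))

lemma ofReal_hyperRho_rpow_neg_le (hqm : IsQuasiMetric d κ) (hκ : 0 < κ) {γ : ℝ} (hγ : 0 ≤ γ)
    (x y z : X) :
    ENNReal.ofReal (hyperRho d x y z) ^ (-γ) ≤ ENNReal.ofReal ((2 * κ) ^ γ) *
      (ENNReal.ofReal (d x y) ^ (-(γ / 2)) * ENNReal.ofReal (d y z) ^ (-(γ / 2))) := by
  have h2κ : 0 < 2 * κ := by positivity
  have hmax := hqm.max_le_two_mul_hyperRho hκ x y z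
  rw [← ENNReal.ofReal_rpow_of_pos h2κ]
  refine ENNReal.rpow_neg_le_mul_rpow_neg_mul_rpow_neg hγ (by simpa using h2κ) ENNReal.ofReal_ne_top
    ?_ ?_ <;> rw [← ENNReal.ofReal_mul h2κ.le] <;> exact ENNReal.ofReal_le_ofReal (by grind)

end IsQuasiMetric

lemma fracInt_mul_fracInt_eq_lintegral_lintegral {X : Type*} [MeasurableSpace X] {d : X → X → ℝ} {μ : Measure X}
    {β η : ℝ} {g : X → ℝ≥0∞} (hg : Measurable g) (hd : ∀ y, Measurable (d y))
    (f : X → ℝ≥0∞) (x : X) :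
    fracInt d μ β η (fun y => f y * fracInt d μ β η g y) x =
      ∫⁻ y, ∫⁻ z, f y * g z * (ENNReal.ofReal (d x y) ^ (β - η) *
        ENNReal.ofReal (d y z) ^ (β - η)) ∂μ ∂μ := by
  simp only [fracInt]
  refine lintegral_congr fun y => ?_
  have hmeas : Measurable fun z => g z * ENNReal.ofReal (d y z) ^ (β - η) :=
    hg.mul ((ENNReal.measurable_ofReal.comp (hd y)).pow_const _)
  calc f y * (∫⁻ z, g z * ENNReal.ofReal (d y z) ^ (β - η) ∂μ) * ENNReal.ofReal (d x y) ^ (β - η)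
      = f y * ENNReal.ofReal (d x y) ^ (β - η) *
          ∫⁻ z, g z * ENNReal.ofReal (d y z) ^ (β - η) ∂μ := by ring
    _ = _ := (lintegral_const_mul _ hmeas).symm
    _ = _ := lintegral_congr fun z => by ring

theorem statement7_general {X : Type*} [MeasurableSpace X]
    (d : X → X → ℝ) (κ : ℝ) (hκ : 1 ≤ κ) (hqm : IsQuasiMetric d κ)
    (hd_meas : Measurable fun p : X × X => d p.1 p.2)
    (μ : Measure X) (η : ℝ)
    (γ : ℝ) (hγ0 : 0 < γ)
    (f g : X → ℝ≥0∞) (hg : Measurable g) (x : X) :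
    Tgamma d μ γ f g x ≤
      ENNReal.ofReal ((2 * κ) ^ γ) *
        fracInt d μ (η - γ / 2) η
          (fun y => f y * fracInt d μ (η - γ / 2) η g y) x := by
  have hexp : η - γ / 2 - η = -(γ / 2) := by ring
  have hd : ∀ y, Measurable (d y) := fun y => hd_meas.comp measurable_prodMk_left
  rw [Tgamma, fracInt_mul_fracInt_eq_lintegral_lintegral hg hd, hexp,
    ← lintegral_const_mul' _ _ ENNReal.ofReal_ne_top]
  refine lintegral_mono fun y => ?_
  rw [← lintegral_const_mul' _ _ ENNReal.ofReal_ne_top]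
  refine lintegral_mono fun z => ?_
  calc f y * g z * ENNReal.ofReal (hyperRho d x y z) ^ (-γ)
      ≤ f y * g z * (ENNReal.ofReal ((2 * κ) ^ γ) *
          (ENNReal.ofReal (d x y) ^ (-(γ / 2)) * ENNReal.ofReal (d y z) ^ (-(γ / 2)))) := by
        gcongr
        exact hqm.ofReal_hyperRho_rpow_neg_le (by linarith) hγ0.le x y z
    _ = _ := by ring

/-- Pointwise bound `T^γ(f,g)(x) ≤ (2κ)^γ I_{η-γ/2}(f · I_{η-γ/2}g)(x)`. -/
theorem statement7 {X : Type*} [MeasurableSpace X]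
    (d : X → X → ℝ) (κ : ℝ) (hκ : 1 ≤ κ) (hqm : IsQuasiMetric d κ)
    (hd_meas : Measurable fun p : X × X => d p.1 p.2)
    (μ : Measure X) (η : ℝ) (hη : 0 < η)
    (a A : ℝ) (ha : 0 < a) (haA : a ≤ A) (hAhl : IsAhlfors d μ η a A)
    (γ : ℝ) (hγ0 : 0 < γ) (hγ2η : γ < 2 * η)
    (f g : X → ℝ≥0∞) (hf : Measurable f) (hg : Measurable g) (x : X) :
    Tgamma d μ γ f g x ≤
      ENNReal.ofReal ((2 * κ) ^ γ) *
        fracInt d μ (η - γ / 2) η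
          (fun y => f y * fracInt d μ (η - γ / 2) η g y) x :=
  statement7_general d κ hκ hqm hd_meas μ η γ hγ0 f g hg x
end

section
/- Let (X,d,μ) be an η-Ahlfors regular quasi-metric measure space with η > 0, triangular constant κ ≥ 1 and Ahlfors constants 0 < a ≤ A < ∞, and let ρ be the third order hypermetric induced by d. Let φ : (0,∞) → [0,∞) be a nonincreasing function. Then there exist constants 0 < C₁ ≤ C₂ < ∞, depending only on κ, a and A (and η), such that for every x ∈ X: C₁ ∫₀^∞ φ(t) t^{2η−1} dt ≤ ∬_{X×X} φ(ρ(x,y,z)) dμ(y) dμ(z) ≤ C₂ ∫₀^∞ φ(t) t^{2η−1} dt. -/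
open MeasureTheory ENNReal

/-!
Since `max (d x y) (d x z) / (2κ) ≤ ρ(x,y,z) ≤ max (d x y) (d x z)` and `φ` is nonincreasing, it
suffices to compare `∬ φ(max (d x y) (d x z) / c) dμ(y) dμ(z)`, the integral of `φ` against the
law of `max (d x y) (d x z) / c` under `μ ⊗ μ`, with the integral of `φ` against `t^{2η-1} dt`.
The first law gives `(-∞, r]` the mass `μ {y | d x y ≤ c r}²`, which by Ahlfors regularity is
comparable to `r^{2η}`, i.e. to `2η` times the mass of `(-∞, r]` under `t^{2η-1} dt`. By the
layer-cake formula an integral of an antitone function only sees the masses of its superlevel sets,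
which are initial segments of `ℝ`, so comparable masses of half-lines give comparable integrals.
-/

open Set

theorem volume_setOf_ofReal_lt_inter_Ioi (e : ℝ≥0∞) :
    volume ({t : ℝ | ENNReal.ofReal t < e} ∩ Ioi 0) = e := by
  rcases eq_or_ne e ⊤ with rfl | he
  · simp [Real.volume_Ioi]
  · have : {t : ℝ | ENNReal.ofReal t < e} ∩ Ioi 0 = Ioo 0 e.toReal := by
      ext t
      simp only [mem_inter_iff, mem_Ioi, mem_Ioo]
      constructor
      · rintro ⟨h, ht⟩
        exact ⟨ht, (ENNReal.ofReal_lt_iff_lt_toReal ht.le he).1 h⟩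
      · rintro ⟨ht, h⟩
        exact ⟨(ENNReal.ofReal_lt_iff_lt_toReal ht.le he).2 h, ht⟩
    rw [this, Real.volume_Ioo, sub_zero, ENNReal.ofReal_toReal he]

theorem lintegral_eq_lintegral_meas_ofReal_lt {α : Type*} [MeasurableSpace α] (μ : Measure α)
    [SFinite μ] {f : α → ℝ≥0∞} (hf : Measurable f) :
    ∫⁻ ω, f ω ∂μ = ∫⁻ t in Ioi (0 : ℝ), μ {ω | ENNReal.ofReal t < f ω} := by
  set S : Set (α × ℝ) := {q | ENNReal.ofReal q.2 < f q.1}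
  have hS : MeasurableSet S :=
    measurableSet_lt (ENNReal.measurable_ofReal.comp measurable_snd) (hf.comp measurable_fst)
  calc ∫⁻ ω, f ω ∂μ = ∫⁻ ω, (∫⁻ t in Ioi (0 : ℝ), S.indicator 1 (ω, t)) ∂μ := by
        refine lintegral_congr fun ω => ?_
        rw [← volume_setOf_ofReal_lt_inter_Ioi (f ω), ← Measure.restrict_apply' measurableSet_Ioi,
          ← lintegral_indicator_one (measurableSet_lt ENNReal.measurable_ofReal measurable_const)]
        rfl
    _ = ∫⁻ t in Ioi (0 : ℝ), ∫⁻ ω, S.indicator 1 (ω, t) ∂μ :=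
        lintegral_lintegral_swap (f := fun ω t => S.indicator 1 (ω, t))
          (measurable_one.indicator hS).aemeasurable
    _ = ∫⁻ t in Ioi (0 : ℝ), μ {ω | ENNReal.ofReal t < f ω} := by
        refine lintegral_congr fun t => ?_
        rw [← lintegral_indicator_one (measurableSet_lt measurable_const hf)]
        rfl

theorem IsLowerSet.measure_le_of_measure_Iic_le {ν₁ ν₂ : Measure ℝ}
    (h : ∀ r, ν₁ (Iic r) ≤ ν₂ (Iio r)) {L : Set ℝ} (hL : IsLowerSet L) : ν₁ L ≤ ν₂ L := by
  rcases L.eq_empty_or_nonempty with rfl | hne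
  · simp
  by_cases hbdd : BddAbove L
  · calc ν₁ L ≤ ν₁ (Iic (sSup L)) := measure_mono fun s hs => le_csSup hbdd hs
      _ ≤ ν₂ (Iio (sSup L)) := h _
      _ ≤ ν₂ L := measure_mono fun r hr => by
          obtain ⟨s, hs, hrs⟩ := exists_lt_of_lt_csSup hne hr
          exact hL hrs.le hs
  · have hL_eq : L = ⋃ n : ℕ, Iic (n : ℝ) := by
      refine (eq_univ_of_forall fun r => ?_).trans
        (eq_univ_of_forall fun r => mem_iUnion.2 ⟨⌈r⌉₊, Nat.le_ceil r⟩).symm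
      obtain ⟨s, hs, hrs⟩ := not_bddAbove_iff.1 hbdd r
      exact hL hrs.le hs
    have hmono : Monotone fun n : ℕ => Iic (n : ℝ) := fun m n hmn =>
      Iic_subset_Iic.2 (by exact_mod_cast hmn)
    calc ν₁ L = ⨆ n : ℕ, ν₁ (Iic n) := by rw [hL_eq, hmono.measure_iUnion]
      _ ≤ ⨆ n : ℕ, ν₂ (Iio n) := iSup_mono fun n => h n
      _ ≤ ν₂ L := iSup_le fun n => measure_mono fun r hr =>
          hL_eq ▸ mem_iUnion.2 ⟨n, Iio_subset_Iic_self hr⟩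

theorem Antitone.lintegral_le_of_measure_Iic_le {ν₁ ν₂ : Measure ℝ} [SFinite ν₁] [SFinite ν₂]
    {Φ : ℝ → ℝ≥0∞} (hΦ : Antitone Φ) (h : ∀ r, ν₁ (Iic r) ≤ ν₂ (Iio r)) :
    ∫⁻ s, Φ s ∂ν₁ ≤ ∫⁻ s, Φ s ∂ν₂ := by
  rw [lintegral_eq_lintegral_meas_ofReal_lt ν₁ hΦ.measurable,
    lintegral_eq_lintegral_meas_ofReal_lt ν₂ hΦ.measurable]
  exact lintegral_mono fun t =>
    IsLowerSet.measure_le_of_measure_Iic_le h fun s r hrs hs => lt_of_lt_of_le hs (hΦ hrs)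

-- Extending by `⊤` makes an antitone function on `(0, ∞)` antitone on `ℝ`.
noncomputable def extendTop (φ : ℝ → ℝ) (s : ℝ) : ℝ≥0∞ := if 0 < s then ENNReal.ofReal (φ s) else ⊤

section extendTop

variable {φ : ℝ → ℝ} {s : ℝ}

theorem extendTop_of_pos (hs : 0 < s) : extendTop φ s = ENNReal.ofReal (φ s) := if_pos hs

theorem ofReal_le_extendTop : ENNReal.ofReal (φ s) ≤ extendTop φ s := by
  unfold extendTop
  split_ifs <;> simp

theorem antitone_extendTop (hφ : AntitoneOn φ (Ioi 0)) : Antitone (extendTop φ) := by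
  intro s t hst
  by_cases hs : 0 < s
  · rw [extendTop_of_pos (hs.trans_le hst), extendTop_of_pos hs]
    exact ENNReal.ofReal_le_ofReal (hφ hs (hs.trans_le hst) hst)
  · simp [extendTop, hs]

end extendTop

noncomputable def powerWeight (p : ℝ) : Measure ℝ :=
  (volume.restrict (Ioi 0)).withDensity fun s => ENNReal.ofReal (s ^ (p - 1))

section powerWeight

variable {p : ℝ}

instance : SFinite (powerWeight p) := by
  unfold powerWeight
  infer_instance

theorem powerWeight_Iic_eq_lintegral (r : ℝ) :
    powerWeight p (Iic r) = ∫⁻ s in Ioc 0 r, ENNReal.ofReal (s ^ (p - 1)) := by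
  rw [powerWeight, withDensity_apply _ measurableSet_Iic,
    Measure.restrict_restrict measurableSet_Iic, Iic_inter_Ioi]

theorem powerWeight_Iic (hp : 0 < p) {r : ℝ} (hr : 0 ≤ r) :
    powerWeight p (Iic r) = ENNReal.ofReal (r ^ p / p) := by
  have hexp : -1 < p - 1 := by linarith
  have hint : IntegrableOn (fun s : ℝ => s ^ (p - 1)) (Ioc 0 r) :=
    (intervalIntegral.intervalIntegrable_rpow' hexp).1
  rw [powerWeight_Iic_eq_lintegral, ← ofReal_integral_eq_lintegral_ofReal hint
      ((ae_restrict_iff' measurableSet_Ioc).2 (.of_forall fun s hs => Real.rpow_nonneg hs.1.le _)),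
    ← intervalIntegral.integral_of_le hr, integral_rpow (Or.inl hexp), sub_add_cancel,
    Real.zero_rpow hp.ne', sub_zero]

theorem powerWeight_Iic_of_nonpos {r : ℝ} (hr : r ≤ 0) : powerWeight p (Iic r) = 0 := by
  rw [powerWeight_Iic_eq_lintegral, Ioc_eq_empty (not_lt.2 hr), Measure.restrict_empty,
    lintegral_zero_measure]

theorem powerWeight_Iio (r : ℝ) : powerWeight p (Iio r) = powerWeight p (Iic r) :=
  measure_congr <| Iio_ae_eq_Iic' <| withDensity_absolutelyContinuous _ _ <|
    Measure.restrict_le_self.absolutelyContinuous (measure_singleton r)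

theorem lintegral_powerWeight_extendTop {φ : ℝ → ℝ} (hφ : AntitoneOn φ (Ioi 0)) :
    ∫⁻ s, extendTop φ s ∂powerWeight p = ∫⁻ t in Ioi 0, ENNReal.ofReal (φ t * t ^ (p - 1)) := by
  rw [powerWeight, lintegral_withDensity_eq_lintegral_mul _
    (by fun_prop) (antitone_extendTop hφ).measurable]
  refine setLIntegral_congr_fun measurableSet_Ioi fun t ht => ?_
  rw [Pi.mul_apply, extendTop_of_pos ht, mul_comm, ENNReal.ofReal_mul' (Real.rpow_nonneg ht.le _)]

end powerWeight

theorem sq_mul_mul_rpow_eq {A η ρ r : ℝ} (hη : 0 < η) (hρ : 0 ≤ ρ) (hr : 0 ≤ r) :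
    (A * (ρ * r) ^ η) ^ 2 = 2 * η * A ^ 2 * ρ ^ (2 * η) * (r ^ (2 * η) / (2 * η)) := by
  rw [mul_pow, ← Real.rpow_mul_natCast (by positivity), Real.mul_rpow hρ hr]
  field_simp
  ring_nf

section QuasiMetric

variable {X : Type*} {d : X → X → ℝ} {κ : ℝ}

theorem IsQuasiMetric.hyperRho_le_max (hqm : IsQuasiMetric d κ) (x y z : X) :
    hyperRho d x y z ≤ max (d x y) (d x z) := by
  obtain ⟨hnonneg, hzero, hsymm, -⟩ := hqm
  refine (ciInf_le ⟨0, ?_⟩ x).trans_eq ?_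
  · rintro _ ⟨u, rfl⟩
    exact (hnonneg x u).trans (le_max_left _ _)
  · rw [(hzero x x).2 rfl, hsymm y x, hsymm z x, max_eq_right (le_max_of_le_left (hnonneg x y))]

theorem IsQuasiMetric.max_div_le_hyperRho (hqm : IsQuasiMetric d κ) (hκ : 0 < κ) (x y z : X) :
    max (d x y) (d x z) / (2 * κ) ≤ hyperRho d x y z := by
  obtain ⟨-, -, hsymm, htri⟩ := hqm
  have : Nonempty X := ⟨x⟩
  refine le_ciInf fun u => (div_le_iff₀ (by positivity)).2 ?_
  set m := max (d x u) (max (d y u) (d z u))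
  have hdist : ∀ v, d v u ≤ m → d x v ≤ m * (2 * κ) := fun v hv =>
    calc d x v ≤ κ * (d x u + d u v) := htri x u v
      _ ≤ κ * (m + m) := by rw [hsymm u v]; gcongr; exact le_max_left _ _
      _ = m * (2 * κ) := by ring
  exact max_le (hdist y (le_max_of_le_right (le_max_left _ _)))
    (hdist z (le_max_of_le_right (le_max_right _ _)))

theorem IsQuasiMetric.extendTop_max_le_ofReal_hyperRho {φ : ℝ → ℝ} (hqm : IsQuasiMetric d κ)
    (hκ : 0 < κ) (hφ : AntitoneOn φ (Ioi 0)) {x y : X} (hy : y ≠ x) (z : X) :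
    extendTop φ (max (d x y) (d x z)) ≤ ENNReal.ofReal (φ (hyperRho d x y z)) := by
  have hpos : 0 < max (d x y) (d x z) :=
    lt_max_of_lt_left ((hqm.1 x y).lt_of_ne fun h => hy ((hqm.2.1 x y).1 h.symm).symm)
  have hρ : 0 < hyperRho d x y z := (div_pos hpos (by positivity)).trans_le
    (hqm.max_div_le_hyperRho hκ x y z)
  rw [← extendTop_of_pos hρ]
  exact antitone_extendTop hφ (hqm.hyperRho_le_max x y z)

noncomputable def maxLaw [MeasurableSpace X] (μ : Measure X) (f : X → ℝ) (c : ℝ) : Measure ℝ :=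
  (μ.prod μ).map fun q => max (f q.1) (f q.2) / c

section maxLaw

variable [MeasurableSpace X] {μ : Measure X} [SFinite μ] {f : X → ℝ} {c : ℝ}

instance : SFinite (maxLaw μ f c) := by
  unfold maxLaw
  infer_instance

theorem measurable_max_div (hf : Measurable f) (c : ℝ) :
    Measurable fun q : X × X => max (f q.1) (f q.2) / c :=
  ((hf.comp measurable_fst).max (hf.comp measurable_snd)).div_const c

theorem maxLaw_Iic (hf : Measurable f) (hc : 0 < c) (r : ℝ) :
    maxLaw μ f c (Iic r) = μ {y | f y ≤ c * r} ^ 2 := by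
  have hpre : (fun q : X × X => max (f q.1) (f q.2) / c) ⁻¹' Iic r =
      {y | f y ≤ c * r} ×ˢ {y | f y ≤ c * r} := by
    ext q
    simp [div_le_iff₀ hc, mul_comm]
  rw [maxLaw, Measure.map_apply (measurable_max_div hf c) measurableSet_Iic, hpre,
    Measure.prod_prod, sq]

theorem maxLaw_Iio (hf : Measurable f) (hc : 0 < c) (r : ℝ) :
    maxLaw μ f c (Iio r) = μ {y | f y < c * r} ^ 2 := by
  have hpre : (fun q : X × X => max (f q.1) (f q.2) / c) ⁻¹' Iio r =
      {y | f y < c * r} ×ˢ {y | f y < c * r} := by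
    ext q
    simp [div_lt_iff₀ hc, mul_comm]
  rw [maxLaw, Measure.map_apply (measurable_max_div hf c) measurableSet_Iio, hpre,
    Measure.prod_prod, sq]

theorem lintegral_maxLaw (hf : Measurable f) {Φ : ℝ → ℝ≥0∞} (hΦ : Measurable Φ) :
    ∫⁻ s, Φ s ∂maxLaw μ f c = ∫⁻ y, ∫⁻ z, Φ (max (f y) (f z) / c) ∂μ ∂μ := by
  rw [maxLaw, lintegral_map hΦ (measurable_max_div hf c),
    lintegral_prod (fun q : X × X => Φ (max (f q.1) (f q.2) / c))
      (hΦ.comp (measurable_max_div hf c)).aemeasurable]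

end maxLaw

section Ahlfors

variable [MeasurableSpace X] {μ : Measure X} {η a A c : ℝ} {x : X}

theorem IsAhlfors.measure_singleton (hAhl : IsAhlfors d μ η a A) (hη : 0 < η)
    (hx : d x x = 0) : μ {x} = 0 := by
  have hlim : Filter.Tendsto (fun r : ℝ => ENNReal.ofReal (A * r ^ η)) (nhdsWithin 0 (Ioi 0))
      (nhds 0) := by
    have hcont : Continuous fun r : ℝ => ENNReal.ofReal (A * r ^ η) :=
      ENNReal.continuous_ofReal.comp (continuous_const.mul (Real.continuous_rpow_const hη.le))
    simpa [Real.zero_rpow hη.ne'] using (hcont.tendsto 0).mono_left nhdsWithin_le_nhds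
  refine nonpos_iff_eq_zero.1 (ge_of_tendsto hlim ?_)
  filter_upwards [self_mem_nhdsWithin] with r hr
  have hx_mem : x ∈ {y | d x y < r} := show d x x < r by rw [hx]; exact hr
  exact (measure_mono (singleton_subset_iff.2 hx_mem)).trans (hAhl x r hr).2

theorem IsAhlfors.sigmaFinite [Nonempty X] (hAhl : IsAhlfors d μ η a A) : SigmaFinite μ := by
  obtain ⟨x₀⟩ := ‹Nonempty X›
  refine ⟨⟨⟨fun n => {y | d x₀ y < n + 1}, fun _ => trivial, fun n => ?_, ?_⟩⟩⟩
  · exact ((hAhl x₀ _ (by positivity)).2).trans_lt ofReal_lt_top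
  · exact eq_univ_of_forall fun y => mem_iUnion.2
      ⟨⌈d x₀ y⌉₊, show d x₀ y < _ from (Nat.le_ceil _).trans_lt (lt_add_one _)⟩

theorem IsAhlfors.maxLaw_Iic_le [SFinite μ] (hAhl : IsAhlfors d μ η a A) (hqm : IsQuasiMetric d κ)
    (hη : 0 < η) (hA : 0 ≤ A) (hdx : Measurable (d x)) (hc : 0 < c) (r : ℝ) :
    maxLaw μ (d x) c (Iic r) ≤
      (ENNReal.ofReal (2 * η * A ^ 2 * (2 * c) ^ (2 * η)) • powerWeight (2 * η)) (Iio r) := by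
  rw [maxLaw_Iic hdx hc, Measure.smul_apply, smul_eq_mul, powerWeight_Iio]
  rcases le_or_gt r 0 with hr | hr
  · have hsub : {y | d x y ≤ c * r} ⊆ {x} := fun y hy =>
      ((hqm.2.1 x y).1 (le_antisymm (hy.trans (mul_nonpos_of_nonneg_of_nonpos hc.le hr))
        (hqm.1 x y))).symm
    rw [measure_mono_null hsub (hAhl.measure_singleton hη ((hqm.2.1 x x).2 rfl))]
    simp
  · calc μ {y | d x y ≤ c * r} ^ 2 ≤ μ {y | d x y < 2 * c * r} ^ 2 := by
          gcongr μ ?_ ^ 2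
          exact fun y (hy : d x y ≤ c * r) => show d x y < 2 * c * r by nlinarith
      _ ≤ ENNReal.ofReal (A * (2 * c * r) ^ η) ^ 2 := by
          gcongr
          exact (hAhl x _ (by positivity)).2
      _ = _ := by
          rw [powerWeight_Iic (by positivity) hr.le, ← ENNReal.ofReal_pow (by positivity),
            ← ENNReal.ofReal_mul (by positivity), sq_mul_mul_rpow_eq hη (by positivity) hr.le]

theorem IsAhlfors.smul_powerWeight_Iic_le_maxLaw [SFinite μ] (hAhl : IsAhlfors d μ η a A)
    (hη : 0 < η) (ha : 0 ≤ a) (hdx : Measurable (d x)) (r : ℝ) :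
    (ENNReal.ofReal (2 * η * a ^ 2) • powerWeight (2 * η)) (Iic r) ≤ maxLaw μ (d x) 1 (Iio r) := by
  rw [maxLaw_Iio hdx one_pos, Measure.smul_apply, smul_eq_mul]
  rcases le_or_gt r 0 with hr | hr
  · rw [powerWeight_Iic_of_nonpos hr, mul_zero]
    exact bot_le
  · calc ENNReal.ofReal (2 * η * a ^ 2) * powerWeight (2 * η) (Iic r)
        = ENNReal.ofReal (a * (1 * r) ^ η) ^ 2 := by
          rw [powerWeight_Iic (by positivity) hr.le, ← ENNReal.ofReal_pow (by positivity),
            ← ENNReal.ofReal_mul (by positivity), sq_mul_mul_rpow_eq hη zero_le_one hr.le,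
            Real.one_rpow, mul_one]
      _ ≤ μ {y | d x y < 1 * r} ^ 2 := by
          gcongr
          exact (hAhl x _ (by positivity)).1

end Ahlfors

end QuasiMetric

theorem statement9_general {X : Type*} [MeasurableSpace X]
    (d : X → X → ℝ) (κ : ℝ) (hκ : 1 ≤ κ) (hqm : IsQuasiMetric d κ)
    (hd_meas : Measurable fun p : X × X => d p.1 p.2)
    (μ : Measure X) (η : ℝ) (hη : 0 < η)
    (a A : ℝ) (ha : 0 < a) (haA : a ≤ A) (hAhl : IsAhlfors d μ η a A)
    (φ : ℝ → ℝ)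
    (hφ_mono : ∀ s t, 0 < s → s ≤ t → φ t ≤ φ s) :
    ∃ C₁ C₂ : ℝ, 0 < C₁ ∧ C₁ ≤ C₂ ∧ ∀ x : X,
      ENNReal.ofReal C₁ *
          ∫⁻ t in Set.Ioi (0 : ℝ), ENNReal.ofReal (φ t * t ^ (2 * η - 1)) ≤
        (∫⁻ y, ∫⁻ z, ENNReal.ofReal (φ (hyperRho d x y z)) ∂μ ∂μ) ∧
      (∫⁻ y, ∫⁻ z, ENNReal.ofReal (φ (hyperRho d x y z)) ∂μ ∂μ) ≤
        ENNReal.ofReal C₂ *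
          ∫⁻ t in Set.Ioi (0 : ℝ), ENNReal.ofReal (φ t * t ^ (2 * η - 1)) := by
  rcases isEmpty_or_nonempty X with hX | hX
  · exact ⟨1, 1, one_pos, le_rfl, isEmptyElim⟩
  have := hAhl.sigmaFinite
  have hκ0 : 0 < κ := by linarith
  have hφ : AntitoneOn φ (Ioi 0) := fun s hs t _ hst => hφ_mono s t hs hst
  have hΦ := antitone_extendTop hφ
  have hK := lintegral_powerWeight_extendTop (p := 2 * η) hφ
  have hdx : ∀ x, Measurable (d x) := fun x => hd_meas.comp measurable_prodMk_left
  refine ⟨2 * η * a ^ 2, 2 * η * A ^ 2 * (2 * (2 * κ)) ^ (2 * η), by positivity, ?_,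
    fun x => ⟨?_, ?_⟩⟩
  · exact (mul_le_mul_of_nonneg_left (pow_le_pow_left₀ ha.le haA 2) (by positivity)).trans
      (le_mul_of_one_le_right (by positivity) (Real.one_le_rpow (by linarith) (by positivity)))
  · have hne : ∀ᵐ y ∂μ, y ≠ x :=
      compl_mem_ae_iff.2 (hAhl.measure_singleton hη ((hqm.2.1 x x).2 rfl))
    calc _ = ∫⁻ s, extendTop φ s ∂(ENNReal.ofReal (2 * η * a ^ 2) • powerWeight (2 * η)) := by
          rw [lintegral_smul_measure, hK, smul_eq_mul]
      _ ≤ ∫⁻ s, extendTop φ s ∂maxLaw μ (d x) 1 :=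
          hΦ.lintegral_le_of_measure_Iic_le (hAhl.smul_powerWeight_Iic_le_maxLaw hη ha.le (hdx x))
      _ = ∫⁻ y, ∫⁻ z, extendTop φ (max (d x y) (d x z) / 1) ∂μ ∂μ :=
          lintegral_maxLaw (hdx x) hΦ.measurable
      _ ≤ _ := lintegral_mono_ae <| hne.mono fun y hy => lintegral_mono fun z => by
          simpa only [div_one] using hqm.extendTop_max_le_ofReal_hyperRho hκ0 hφ hy z
  · calc _ ≤ ∫⁻ y, ∫⁻ z, extendTop φ (max (d x y) (d x z) / (2 * κ)) ∂μ ∂μ :=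
          lintegral_mono fun y => lintegral_mono fun z =>
            ofReal_le_extendTop.trans (hΦ (hqm.max_div_le_hyperRho hκ0 x y z))
      _ = ∫⁻ s, extendTop φ s ∂maxLaw μ (d x) (2 * κ) :=
          (lintegral_maxLaw (hdx x) hΦ.measurable).symm
      _ ≤ ∫⁻ s, extendTop φ s ∂(ENNReal.ofReal (2 * η * A ^ 2 * (2 * (2 * κ)) ^ (2 * η)) •
            powerWeight (2 * η)) := hΦ.lintegral_le_of_measure_Iic_le
          (hAhl.maxLaw_Iic_le hqm hη (ha.le.trans haA) (hdx x) (by positivity))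
      _ = _ := by rw [lintegral_smul_measure, hK, smul_eq_mul]

/-- Lemma: for nonincreasing `φ : (0,∞) → [0,∞)` there are constants
`0 < C₁ ≤ C₂ < ∞` such that for every `x`,
`C₁ ∫₀^∞ φ(t) t^{2η-1} dt ≤ ∬ φ(ρ(x,y,z)) dμ(y) dμ(z) ≤ C₂ ∫₀^∞ φ(t) t^{2η-1} dt`. -/
theorem statement9 {X : Type*} [MeasurableSpace X]
    (d : X → X → ℝ) (κ : ℝ) (hκ : 1 ≤ κ) (hqm : IsQuasiMetric d κ)
    (hd_meas : Measurable fun p : X × X => d p.1 p.2)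
    (μ : Measure X) (η : ℝ) (hη : 0 < η)
    (a A : ℝ) (ha : 0 < a) (haA : a ≤ A) (hAhl : IsAhlfors d μ η a A)
    (φ : ℝ → ℝ) (hφ_nonneg : ∀ t, 0 < t → 0 ≤ φ t)
    (hφ_mono : ∀ s t, 0 < s → s ≤ t → φ t ≤ φ s) :
    ∃ C₁ C₂ : ℝ, 0 < C₁ ∧ C₁ ≤ C₂ ∧ ∀ x : X,
      ENNReal.ofReal C₁ *
          ∫⁻ t in Set.Ioi (0 : ℝ), ENNReal.ofReal (φ t * t ^ (2 * η - 1)) ≤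
        (∫⁻ y, ∫⁻ z, ENNReal.ofReal (φ (hyperRho d x y z)) ∂μ ∂μ) ∧
      (∫⁻ y, ∫⁻ z, ENNReal.ofReal (φ (hyperRho d x y z)) ∂μ ∂μ) ≤
        ENNReal.ofReal C₂ *
          ∫⁻ t in Set.Ioi (0 : ℝ), ENNReal.ofReal (φ t * t ^ (2 * η - 1)) :=
  statement9_general d κ hκ hqm hd_meas μ η hη a A ha haA hAhl φ hφ_mono
end
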